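/- Let W ∈ ℝ^{n×n} be symmetric doubly stochastic, η > 0, W_η := I − η(I − W), ρ_η := ‖W_η − (1/n)𝟙𝟙ᵀ‖ with 0 < ρ_η < 1, w₁ := 1 + ρ_η², w₂ := 1 − ρ_η². Let ω ≥ 0, and let Y, H, Ỹ, G, G⁺ be square-integrable random n×m matrices with E[‖Y − Ỹ‖²] ≤ ω·E[‖Y − H‖²]. Set Y⁺ := W_η·Y + (G⁺ − G) + η(I − W)(Y − Ỹ). Then E[‖Y⁺ − Ȳ⁺‖²] ≤ (w₁/2)·E[‖Y − Ȳ‖²] + (2w₁/w₂)·E[‖G⁺ − G‖²] + (8w₁η²ω/w₂)·E[‖Y − H‖²]. -/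

import Mathlib

/-!
With `J = (1/n)𝟙𝟙ᵀ`, `J` absorbs `W_η` on both sides and annihilates `I − W`, so
`Y⁺ − JY⁺ = (W_η − J)(Y − JY) + [(I − J)(G⁺ − G) + η(I − W)(Y − Ỹ)]`.
The first summand has squared norm at most `ρ_η²‖Y − Ȳ‖²`. Since `I − J` is an orthogonal projection
and a doubly stochastic `W` is a Frobenius contraction (Jensen on the rows, then the column sums),
the bracket is at most `2‖G⁺ − G‖² + 8η²‖Y − Ỹ‖²`. Young's inequality combines the two pointwise;
integrating and applying the compression bound `E‖Y − Ỹ‖² ≤ ω E‖Y − H‖²` finishes the proof.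
-/

open MeasureTheory Finset

/-- Squared Frobenius norm of a real matrix. -/
def frobSq {n m : ℕ} (M : Matrix (Fin n) (Fin m) ℝ) : ℝ := ∑ i, ∑ j, (M i j) ^ 2

/-- The matrix each of whose rows is the average of the rows of `M`. -/
noncomputable def rowAvg {n m : ℕ} (M : Matrix (Fin n) (Fin m) ℝ) :
    Matrix (Fin n) (Fin m) ℝ :=
  Matrix.of fun _ j => (n : ℝ)⁻¹ * ∑ i, M i j

/-- Spectral norm (ℓ²-operator norm) of a real square matrix. -/
noncomputable def specNorm {n : ℕ} (M : Matrix (Fin n) (Fin n) ℝ) : ℝ :=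
  ‖Matrix.toEuclideanCLM (𝕜 := ℝ) M‖

open Matrix

section Frobenius

variable {n m : ℕ}

lemma frobSq_nonneg (M : Matrix (Fin n) (Fin m) ℝ) : 0 ≤ frobSq M :=
  sum_nonneg fun _ _ => sum_nonneg fun _ _ => sq_nonneg _

lemma frobSq_eq_sum_col (M : Matrix (Fin n) (Fin m) ℝ) :
    frobSq M = ∑ j, ∑ i, (M i j) ^ 2 :=
  sum_comm

lemma frobSq_smul (c : ℝ) (M : Matrix (Fin n) (Fin m) ℝ) :
    frobSq (c • M) = c ^ 2 * frobSq M := by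
  simp only [frobSq, Matrix.smul_apply, smul_eq_mul, mul_pow, mul_sum]

lemma frobSq_add_le_of_pos {s : ℝ} (hs : 0 < s) (A B : Matrix (Fin n) (Fin m) ℝ) :
    frobSq (A + B) ≤ (1 + s) * frobSq A + (1 + s⁻¹) * frobSq B := by
  have young (a b : ℝ) : (a + b) ^ 2 ≤ (1 + s) * a ^ 2 + (1 + s⁻¹) * b ^ 2 := by
    have key : 0 ≤ s * (s * a - b) ^ 2 / s ^ 2 := by positivity
    have h : (1 + s) * a ^ 2 + (1 + s⁻¹) * b ^ 2 - (a + b) ^ 2 = s * (s * a - b) ^ 2 / s ^ 2 := by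
      field_simp
      ring
    linarith
  calc frobSq (A + B) ≤ ∑ i, ∑ j, ((1 + s) * (A i j) ^ 2 + (1 + s⁻¹) * (B i j) ^ 2) :=
        sum_le_sum fun i _ => sum_le_sum fun j _ => young _ _
    _ = (1 + s) * frobSq A + (1 + s⁻¹) * frobSq B := by
        simp only [frobSq, sum_add_distrib, mul_sum]

lemma frobSq_add_le (A B : Matrix (Fin n) (Fin m) ℝ) :
    frobSq (A + B) ≤ 2 * frobSq A + 2 * frobSq B := by
  simpa [one_add_one_eq_two] using frobSq_add_le_of_pos one_pos A B

lemma frobSq_sub_le (A B : Matrix (Fin n) (Fin m) ℝ) :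
    frobSq (A - B) ≤ 2 * frobSq A + 2 * frobSq B := by
  simpa [sub_eq_add_neg, frobSq] using frobSq_add_le A (-B)

/-- Young's inequality with the weight `s = (1 - ρ²) / (2ρ²)`, which turns the contraction factor
`ρ²` of the first summand into `(1 + ρ²) / 2`. -/
lemma frobSq_add_le_of_le_sq_mul {ρ x : ℝ} (hρ0 : 0 < ρ) (hρ1 : ρ < 1)
    {A : Matrix (Fin n) (Fin m) ℝ} (hA : frobSq A ≤ ρ ^ 2 * x) (B : Matrix (Fin n) (Fin m) ℝ) :
    frobSq (A + B) ≤ (1 + ρ ^ 2) / 2 * x + (1 + ρ ^ 2) / (1 - ρ ^ 2) * frobSq B := by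
  have hρ2 : 0 < 1 - ρ ^ 2 := by nlinarith
  set s := (1 - ρ ^ 2) / (2 * ρ ^ 2) with hs_def
  have hs : 0 < s := by positivity
  have hs₁ : (1 + s) * ρ ^ 2 = (1 + ρ ^ 2) / 2 := by rw [hs_def]; field_simp; ring
  have hs₂ : 1 + s⁻¹ = (1 + ρ ^ 2) / (1 - ρ ^ 2) := by rw [hs_def]; field_simp; ring
  calc frobSq (A + B) ≤ (1 + s) * frobSq A + (1 + s⁻¹) * frobSq B := frobSq_add_le_of_pos hs A B
    _ ≤ (1 + s) * (ρ ^ 2 * x) + (1 + s⁻¹) * frobSq B := by gcongr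
    _ = (1 + ρ ^ 2) / 2 * x + (1 + ρ ^ 2) / (1 - ρ ^ 2) * frobSq B := by
        rw [← mul_assoc, hs₁, hs₂]

lemma sum_sq_mulVec_le_specNorm (A : Matrix (Fin n) (Fin n) ℝ) (x : Fin n → ℝ) :
    ∑ i, (A *ᵥ x) i ^ 2 ≤ specNorm A ^ 2 * ∑ i, x i ^ 2 := by
  have hnorm (v : Fin n → ℝ) : ‖WithLp.toLp 2 v‖ ^ 2 = ∑ i, v i ^ 2 := by
    simp [EuclideanSpace.norm_sq_eq]
  have h := (toEuclideanCLM (𝕜 := ℝ) A).le_opNorm (WithLp.toLp 2 x)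
  rw [toEuclideanCLM_toLp] at h
  rw [← hnorm, ← hnorm, ← mul_pow]
  exact pow_le_pow_left₀ (norm_nonneg _) h 2

lemma frobSq_mul_le_specNorm (A : Matrix (Fin n) (Fin n) ℝ) (M : Matrix (Fin n) (Fin m) ℝ) :
    frobSq (A * M) ≤ specNorm A ^ 2 * frobSq M := by
  rw [frobSq_eq_sum_col, frobSq_eq_sum_col, mul_sum]
  exact sum_le_sum fun j _ => sum_sq_mulVec_le_specNorm A (fun i => M i j)

lemma frobSq_mul_le_of_mem_doublyStochastic {W : Matrix (Fin n) (Fin n) ℝ}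
    (hW : W ∈ doublyStochastic ℝ (Fin n)) (M : Matrix (Fin n) (Fin m) ℝ) :
    frobSq (W * M) ≤ frobSq M := by
  have jensen (i : Fin n) (j : Fin m) : (W * M) i j ^ 2 ≤ ∑ k, W i k * M k j ^ 2 := by
    have := sum_sq_le_sum_mul_sum_of_sq_le_mul univ (r := fun k => W i k * M k j)
      (fun k _ => hW.1 i k) (fun k _ => mul_nonneg (hW.1 i k) (sq_nonneg (M k j)))
      (fun k _ => le_of_eq (by ring))
    rwa [sum_row_of_mem_doublyStochastic hW, one_mul] at this
  calc frobSq (W * M) ≤ ∑ i, ∑ j, ∑ k, W i k * M k j ^ 2 :=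
        sum_le_sum fun i _ => sum_le_sum fun j _ => jensen i j
    _ = frobSq M := by
        rw [sum_comm, frobSq_eq_sum_col]
        refine sum_congr rfl fun j _ => ?_
        simp only [sum_comm (γ := Fin n), ← sum_mul, sum_col_of_mem_doublyStochastic hW, one_mul]

lemma frobSq_one_sub_mul_le {W : Matrix (Fin n) (Fin n) ℝ}
    (hW : W ∈ doublyStochastic ℝ (Fin n)) (M : Matrix (Fin n) (Fin m) ℝ) :
    frobSq ((1 - W) * M) ≤ 4 * frobSq M := by
  rw [Matrix.sub_mul, Matrix.one_mul]
  linarith [frobSq_sub_le M (W * M), frobSq_mul_le_of_mem_doublyStochastic hW M]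

end Frobenius

section Averaging

variable {n m : ℕ}

/-- The averaging matrix `(1/n) 𝟙𝟙ᵀ`. -/
noncomputable def avgMatrix (n : ℕ) : Matrix (Fin n) (Fin n) ℝ := of fun _ _ => (n : ℝ)⁻¹

lemma rowAvg_eq_avgMatrix_mul (M : Matrix (Fin n) (Fin m) ℝ) : rowAvg M = avgMatrix n * M := by
  ext i j
  simp [rowAvg, avgMatrix, mul_apply, mul_sum]

lemma avgMatrix_mul_of_mem_colStochastic {W : Matrix (Fin n) (Fin n) ℝ}
    (hW : W ∈ colStochastic ℝ (Fin n)) : avgMatrix n * W = avgMatrix n := by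
  ext i j
  simp [avgMatrix, mul_apply, ← mul_sum, sum_col_of_mem_colStochastic hW]

lemma mul_avgMatrix_of_mem_rowStochastic {W : Matrix (Fin n) (Fin n) ℝ}
    (hW : W ∈ rowStochastic ℝ (Fin n)) : W * avgMatrix n = avgMatrix n := by
  ext i j
  simp [avgMatrix, mul_apply, ← sum_mul, sum_row_of_mem_rowStochastic hW]

lemma avgMatrix_mem_colStochastic (hn : 0 < n) : avgMatrix n ∈ colStochastic ℝ (Fin n) :=
  mem_colStochastic_iff_sum.2
    ⟨fun _ _ => by simp [avgMatrix], fun _ => by simp [avgMatrix, hn.ne']⟩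

lemma sum_sub_mean_sq_le (hn : 0 < n) (x : Fin n → ℝ) :
    ∑ i, (x i - (n : ℝ)⁻¹ * ∑ k, x k) ^ 2 ≤ ∑ i, x i ^ 2 := by
  set c := (n : ℝ)⁻¹ * ∑ k, x k
  have hsum : ∑ k, x k = n * c := by simp [c, hn.ne']
  have expand : ∑ i, (x i - c) ^ 2 = ∑ i, x i ^ 2 - n * c ^ 2 := by
    simp only [sub_sq, sum_add_distrib, sum_sub_distrib, ← sum_mul, mul_comm 2 (x _),
      mul_assoc, ← sum_mul, hsum, sum_const, card_univ, Fintype.card_fin, nsmul_eq_mul]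
    ring
  rw [expand]
  nlinarith [sq_nonneg c]

lemma frobSq_sub_rowAvg_le (hn : 0 < n) (M : Matrix (Fin n) (Fin m) ℝ) :
    frobSq (M - rowAvg M) ≤ frobSq M := by
  rw [frobSq_eq_sum_col, frobSq_eq_sum_col]
  exact sum_le_sum fun j _ => sum_sub_mean_sq_le hn (fun i => M i j)

lemma update_sub_rowAvg_eq (hn : 0 < n) {W : Matrix (Fin n) (Fin n) ℝ}
    (hW : W ∈ doublyStochastic ℝ (Fin n)) (η : ℝ) (Y D E : Matrix (Fin n) (Fin m) ℝ) :
    (1 - η • (1 - W)) * Y + D + η • ((1 - W) * E) -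
        rowAvg ((1 - η • (1 - W)) * Y + D + η • ((1 - W) * E)) =
      (1 - η • (1 - W) - avgMatrix n) * (Y - rowAvg Y) + (D - rowAvg D + η • ((1 - W) * E)) := by
  obtain ⟨hWrow, hWcol⟩ := mem_doublyStochastic_iff_mem_rowStochastic_and_mem_colStochastic.1 hW
  have hJW := avgMatrix_mul_of_mem_colStochastic hWcol
  have hWJ := mul_avgMatrix_of_mem_rowStochastic hWrow
  have hJJ := avgMatrix_mul_of_mem_colStochastic (avgMatrix_mem_colStochastic hn)
  simp only [rowAvg_eq_avgMatrix_mul, Matrix.mul_add, Matrix.sub_mul, Matrix.mul_sub,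
    Matrix.smul_mul, Matrix.mul_smul, ← Matrix.mul_assoc, hJW, hWJ, hJJ, Matrix.one_mul]
  module

end Averaging

section Update

variable {n m : ℕ}

lemma frobSq_update_sub_rowAvg_le (hn : 0 < n) {W : Matrix (Fin n) (Fin n) ℝ}
    (hW : W ∈ doublyStochastic ℝ (Fin n)) {η ρ : ℝ}
    (hρ : ρ = specNorm (1 - η • (1 - W) - avgMatrix n)) (hρ0 : 0 < ρ) (hρ1 : ρ < 1)
    (Y D E : Matrix (Fin n) (Fin m) ℝ) :
    frobSq ((1 - η • (1 - W)) * Y + D + η • ((1 - W) * E) -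
        rowAvg ((1 - η • (1 - W)) * Y + D + η • ((1 - W) * E))) ≤
      (1 + ρ ^ 2) / 2 * frobSq (Y - rowAvg Y) + 2 * (1 + ρ ^ 2) / (1 - ρ ^ 2) * frobSq D +
        8 * (1 + ρ ^ 2) * η ^ 2 / (1 - ρ ^ 2) * frobSq E := by
  have hcontract : frobSq ((1 - η • (1 - W) - avgMatrix n) * (Y - rowAvg Y)) ≤
      ρ ^ 2 * frobSq (Y - rowAvg Y) :=
    hρ ▸ frobSq_mul_le_specNorm _ _
  have hrest : frobSq (D - rowAvg D + η • ((1 - W) * E)) ≤ 2 * frobSq D + 8 * η ^ 2 * frobSq E := by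
    have hD := frobSq_sub_rowAvg_le hn D
    have hE : frobSq (η • ((1 - W) * E)) ≤ η ^ 2 * (4 * frobSq E) := by
      rw [frobSq_smul]
      exact mul_le_mul_of_nonneg_left (frobSq_one_sub_mul_le hW E) (sq_nonneg η)
    linarith [frobSq_add_le (D - rowAvg D) (η • ((1 - W) * E))]
  have hρ2 : 0 < 1 - ρ ^ 2 := by nlinarith
  rw [update_sub_rowAvg_eq hn hW]
  calc _ ≤ (1 + ρ ^ 2) / 2 * frobSq (Y - rowAvg Y) +
        (1 + ρ ^ 2) / (1 - ρ ^ 2) * frobSq (D - rowAvg D + η • ((1 - W) * E)) :=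
        frobSq_add_le_of_le_sq_mul hρ0 hρ1 hcontract _
    _ ≤ (1 + ρ ^ 2) / 2 * frobSq (Y - rowAvg Y) +
        (1 + ρ ^ 2) / (1 - ρ ^ 2) * (2 * frobSq D + 8 * η ^ 2 * frobSq E) := by gcongr
    _ = _ := by ring

end Update

section Integrability

variable {n m : ℕ} {Ω : Type*} [MeasurableSpace Ω] {P : Measure Ω}

lemma measurable_frobSq {F : Ω → Matrix (Fin n) (Fin m) ℝ}
    (hF : ∀ i j, Measurable fun ω => F ω i j) : Measurable fun ω => frobSq (F ω) :=
  Finset.measurable_sum _ fun i _ => Finset.measurable_sum _ fun j _ => (hF i j).pow_const 2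

lemma integrable_frobSq_of_le {F : Ω → Matrix (Fin n) (Fin m) ℝ} {g : Ω → ℝ}
    (hF : ∀ i j, Measurable fun ω => F ω i j) (hg : Integrable g P)
    (hle : ∀ ω, frobSq (F ω) ≤ g ω) : Integrable (fun ω => frobSq (F ω)) P :=
  hg.mono' (measurable_frobSq hF).aestronglyMeasurable <| ae_of_all _ fun ω => by
    rw [Real.norm_of_nonneg (frobSq_nonneg _)]
    exact hle ω

lemma integrable_frobSq_sub {F G : Ω → Matrix (Fin n) (Fin m) ℝ}
    (hF : ∀ i j, Measurable fun ω => F ω i j) (hG : ∀ i j, Measurable fun ω => G ω i j)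
    (hFi : Integrable (fun ω => frobSq (F ω)) P) (hGi : Integrable (fun ω => frobSq (G ω)) P) :
    Integrable (fun ω => frobSq (F ω - G ω)) P :=
  integrable_frobSq_of_le (fun i j => (hF i j).sub (hG i j))
    ((hFi.const_mul 2).add (hGi.const_mul 2)) fun _ => frobSq_sub_le _ _

lemma integrable_frobSq_sub_rowAvg (hn : 0 < n) {F : Ω → Matrix (Fin n) (Fin m) ℝ}
    (hF : ∀ i j, Measurable fun ω => F ω i j) (hFi : Integrable (fun ω => frobSq (F ω)) P) :
    Integrable (fun ω => frobSq (F ω - rowAvg (F ω))) P :=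
  integrable_frobSq_of_le
    (fun i j => (hF i j).sub (measurable_const.mul (Finset.measurable_sum _ fun k _ => hF k j)))
    hFi fun _ => frobSq_sub_rowAvg_le hn _

end Integrability

lemma integral_le_of_le_add_add {Ω : Type*} [MeasurableSpace Ω] {P : Measure Ω}
    {f u v w : Ω → ℝ} {a b c : ℝ} (hf : ∀ ω, 0 ≤ f ω)
    (hu : Integrable u P) (hv : Integrable v P) (hw : Integrable w P)
    (hle : ∀ ω, f ω ≤ a * u ω + b * v ω + c * w ω) :
    ∫ ω, f ω ∂P ≤ a * ∫ ω, u ω ∂P + b * ∫ ω, v ω ∂P + c * ∫ ω, w ω ∂P := by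
  have hab : Integrable (fun ω => a * u ω + b * v ω) P := (hu.const_mul a).add (hv.const_mul b)
  calc ∫ ω, f ω ∂P ≤ ∫ ω, (a * u ω + b * v ω + c * w ω) ∂P :=
        integral_mono_of_nonneg (ae_of_all _ hf) (hab.add (hw.const_mul c)) (ae_of_all _ hle)
    _ = _ := by
        rw [integral_add hab (hw.const_mul c), integral_add (hu.const_mul a) (hv.const_mul b),
          integral_const_mul, integral_const_mul, integral_const_mul]

theorem statement11_general {n m : ℕ} (hn : 0 < n)
    {Ω : Type*} [MeasurableSpace Ω] (P : Measure Ω)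
    (W : Matrix (Fin n) (Fin n) ℝ)
    (hWnn : ∀ i j, 0 ≤ W i j) (hWsymm : W.transpose = W)
    (hWrow : ∀ i, ∑ j, W i j = 1)
    (η : ℝ)
    (ρη : ℝ)
    (hρη : ρη = specNorm ((1 : Matrix (Fin n) (Fin n) ℝ) - η • (1 - W) -
      Matrix.of fun _ _ => (n : ℝ)⁻¹))
    (hρ0 : 0 < ρη) (hρ1 : ρη < 1)
    (ωc : ℝ)
    (Y H Ytil G Gp : Ω → Matrix (Fin n) (Fin m) ℝ)
    (hYmeas : ∀ i j, Measurable fun ω => Y ω i j)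
    (hYtmeas : ∀ i j, Measurable fun ω => Ytil ω i j)
    (hGmeas : ∀ i j, Measurable fun ω => G ω i j)
    (hGpmeas : ∀ i j, Measurable fun ω => Gp ω i j)
    (hYint : Integrable (fun ω => frobSq (Y ω)) P)
    (hYtint : Integrable (fun ω => frobSq (Ytil ω)) P)
    (hGint : Integrable (fun ω => frobSq (G ω)) P)
    (hGpint : Integrable (fun ω => frobSq (Gp ω)) P)
    (hcomp : ∫ ω, frobSq (Y ω - Ytil ω) ∂P ≤ ωc * ∫ ω, frobSq (Y ω - H ω) ∂P)
    (Yp : Ω → Matrix (Fin n) (Fin m) ℝ)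
    (hYp : ∀ ω, Yp ω = (1 - η • (1 - W)) * Y ω + (Gp ω - G ω) +
      η • ((1 - W) * (Y ω - Ytil ω))) :
    ∫ ω, frobSq (Yp ω - rowAvg (Yp ω)) ∂P ≤
      (1 + ρη ^ 2) / 2 * ∫ ω, frobSq (Y ω - rowAvg (Y ω)) ∂P +
        2 * (1 + ρη ^ 2) / (1 - ρη ^ 2) * ∫ ω, frobSq (Gp ω - G ω) ∂P +
        8 * (1 + ρη ^ 2) * η ^ 2 * ωc / (1 - ρη ^ 2) *
          ∫ ω, frobSq (Y ω - H ω) ∂P := by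
  have hW₁ : W ∈ rowStochastic ℝ (Fin n) := mem_rowStochastic_iff_sum.2 ⟨hWnn, hWrow⟩
  have hW : W ∈ doublyStochastic ℝ (Fin n) :=
    mem_doublyStochastic_iff_mem_rowStochastic_and_mem_colStochastic.2
      ⟨hW₁, transpose_mem_rowStochastic_iff_mem_colStochastic.1 (hWsymm ▸ hW₁)⟩
  have hρ2 : 0 < 1 - ρη ^ 2 := by nlinarith
  have hmain := integral_le_of_le_add_add (P := P) (fun ω => frobSq_nonneg _)
    (integrable_frobSq_sub_rowAvg hn hYmeas hYint)
    (integrable_frobSq_sub hGpmeas hGmeas hGpint hGint)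
    (integrable_frobSq_sub hYmeas hYtmeas hYint hYtint)
    fun ω => hYp ω ▸ frobSq_update_sub_rowAvg_le hn hW hρη hρ0 hρ1 (Y ω) (Gp ω - G ω) (Y ω - Ytil ω)
  have hc₃ : 0 ≤ 8 * (1 + ρη ^ 2) * η ^ 2 / (1 - ρη ^ 2) := by positivity
  refine hmain.trans (le_of_le_of_eq (add_le_add_right (mul_le_mul_of_nonneg_left hcomp hc₃) _) ?_)
  ring

/-- Consensus contraction of the compressed gradient-tracking
update: with `W_η = I − η(I − W)`, `ρ_η = ‖W_η − (1/n)𝟙𝟙ᵀ‖ ∈ (0,1)`,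
`w₁ = 1 + ρ_η²`, `w₂ = 1 − ρ_η²`, compression error
`E‖Y − Ỹ‖² ≤ ω E‖Y − H‖²`, and `Y⁺ = W_η Y + (G⁺ − G) + η (I − W)(Y − Ỹ)`:
`E‖Y⁺ − Ȳ⁺‖² ≤ (w₁/2) E‖Y − Ȳ‖² + (2w₁/w₂) E‖G⁺ − G‖² + (8w₁η²ω/w₂) E‖Y − H‖²`. -/
theorem statement11 {n m : ℕ} (hn : 0 < n)
    {Ω : Type*} [MeasurableSpace Ω] (P : Measure Ω) [IsProbabilityMeasure P]
    (W : Matrix (Fin n) (Fin n) ℝ)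
    (hWnn : ∀ i j, 0 ≤ W i j) (hWsymm : W.transpose = W)
    (hWrow : ∀ i, ∑ j, W i j = 1)
    (η : ℝ) (hη : 0 < η)
    (ρη : ℝ)
    (hρη : ρη = specNorm ((1 : Matrix (Fin n) (Fin n) ℝ) - η • (1 - W) -
      Matrix.of fun _ _ => (n : ℝ)⁻¹))
    (hρ0 : 0 < ρη) (hρ1 : ρη < 1)
    (ωc : ℝ) (hωc : 0 ≤ ωc)
    (Y H Ytil G Gp : Ω → Matrix (Fin n) (Fin m) ℝ)
    (hYmeas : ∀ i j, Measurable fun ω => Y ω i j)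
    (hHmeas : ∀ i j, Measurable fun ω => H ω i j)
    (hYtmeas : ∀ i j, Measurable fun ω => Ytil ω i j)
    (hGmeas : ∀ i j, Measurable fun ω => G ω i j)
    (hGpmeas : ∀ i j, Measurable fun ω => Gp ω i j)
    (hYint : Integrable (fun ω => frobSq (Y ω)) P)
    (hHint : Integrable (fun ω => frobSq (H ω)) P)
    (hYtint : Integrable (fun ω => frobSq (Ytil ω)) P)
    (hGint : Integrable (fun ω => frobSq (G ω)) P)
    (hGpint : Integrable (fun ω => frobSq (Gp ω)) P)
    (hcomp : ∫ ω, frobSq (Y ω - Ytil ω) ∂P ≤ ωc * ∫ ω, frobSq (Y ω - H ω) ∂P)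
    (Yp : Ω → Matrix (Fin n) (Fin m) ℝ)
    (hYp : ∀ ω, Yp ω = (1 - η • (1 - W)) * Y ω + (Gp ω - G ω) +
      η • ((1 - W) * (Y ω - Ytil ω))) :
    ∫ ω, frobSq (Yp ω - rowAvg (Yp ω)) ∂P ≤
      (1 + ρη ^ 2) / 2 * ∫ ω, frobSq (Y ω - rowAvg (Y ω)) ∂P +
        2 * (1 + ρη ^ 2) / (1 - ρη ^ 2) * ∫ ω, frobSq (Gp ω - G ω) ∂P +
        8 * (1 + ρη ^ 2) * η ^ 2 * ωc / (1 - ρη ^ 2) *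
          ∫ ω, frobSq (Y ω - H ω) ∂P :=
  statement11_general hn P W hWnn hWsymm hWrow η ρη hρη hρ0 hρ1 ωc Y H Ytil G Gp hYmeas hYtmeas
    hGmeas hGpmeas hYint hYtint hGint hGpint hcomp Yp hYp
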